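/- Let n ≥ 6, let a = ⌈n/2⌉ and b = ⌊n/2⌋, and let Σ = (K_n, 𝒯^-_{a−1,b−1}) be the signed complete graph whose negative edges form the spanning tree 𝒯_{a−1,b−1}. Then λ_n(A(Σ)) > 2 − n; moreover, if n ≥ 8 then λ_n(A(Σ)) < −4. -/

import Mathlib

open scoped Classical in
/-- Adjacency matrix of the signed complete graph `(K_n, T⁻)`: entries are `0` on the
diagonal, `-1` on edges of `T` and `+1` on all other off-diagonal positions. -/
noncomputable def signedCompleteMatrix {n : ℕ} (T : SimpleGraph (Fin n)) :
    Matrix (Fin n) (Fin n) ℝ :=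
  fun i j => if i = j then 0 else if T.Adj i j then -1 else 1

/-- The largest (real) eigenvalue `λ₁` of a matrix. -/
noncomputable def lambdaMax {V : Type*} [Fintype V] (M : Matrix V V ℝ) : ℝ :=
  sSup {μ : ℝ | ∃ x : V → ℝ, x ≠ 0 ∧ M.mulVec x = μ • x}

/-- The least (real) eigenvalue `λₙ` of a matrix. -/
noncomputable def lambdaMin {V : Type*} [Fintype V] (M : Matrix V V ℝ) : ℝ :=
  sInf {μ : ℝ | ∃ x : V → ℝ, x ≠ 0 ∧ M.mulVec x = μ • x}

/-- The double star `T_{a,b}`: an edge `0 - 1` with `a` pendant vertices attached to `0`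
(indices `2, …, a+1`) and `b` pendant vertices attached to `1` (indices `a+2, …, a+b+1`). -/
def doubleStar (a b : ℕ) : SimpleGraph (Fin (a + b + 2)) :=
  SimpleGraph.fromRel (fun i j =>
    ((i : ℕ) = 0 ∧ (j : ℕ) = 1) ∨
    ((i : ℕ) = 0 ∧ 2 ≤ (j : ℕ) ∧ (j : ℕ) < a + 2) ∨
    ((i : ℕ) = 1 ∧ a + 2 ≤ (j : ℕ)))

/-- The tree `𝒯_{a-1,b-1}` on `a + b` vertices: a star `K_{1,a-1}` with center `0` and
leaves `1, …, a-1`, a star `K_{1,b-1}` with center `a` and leaves `a+1, …, a+b-1`,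
together with an edge between the pendant vertices `1` and `a+1`. -/
def treeTT (a b : ℕ) : SimpleGraph (Fin (a + b)) :=
  SimpleGraph.fromRel (fun i j =>
    ((i : ℕ) = 0 ∧ 1 ≤ (j : ℕ) ∧ (j : ℕ) ≤ a - 1) ∨
    ((i : ℕ) = a ∧ a + 1 ≤ (j : ℕ) ∧ (j : ℕ) ≤ a + b - 1) ∨
    ((i : ℕ) = 1 ∧ (j : ℕ) = a + 1))

/-- A tree on `Fin n` is the star `K_{1,n-1}` iff some vertex is adjacent to all others. -/
def IsStar {n : ℕ} (T : SimpleGraph (Fin n)) : Prop :=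
  ∃ v : Fin n, ∀ u : Fin n, u ≠ v → T.Adj v u


/-!
Write `A(Σ) = J - I - 2 A(𝒯)`, so that `xᵀ A(Σ) x = (∑ xᵢ)² - ‖x‖² - 2 xᵀ A(𝒯) x`, and compare
`λₙ` with this quadratic form through the Rayleigh principle.

For the lower bound `λₙ ≥ 5/2 - n`: when `n ≥ 8` the `J` term can be dropped, because weighted
AM–GM along the edges of `𝒯` gives `2 xᵀ A(𝒯) x ≤ (n - 7/2) ‖x‖²`; for `n = 6, 7` the form
`xᵀ (A(Σ) + (n - 5/2) I) x` is an explicit sum of squares.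

For the upper bound, the vector equal to `2, 1` on the centre and the leaves of the first star
and to `-2, -1` on those of the second has `xᵀ A(Σ) x ≤ 15 - 9n` and `‖x‖² = n + 6`, and
`(15 - 9n) / (n + 6) < -4` as soon as `n ≥ 8`.
-/

open Finset Matrix

namespace Matrix

variable {V : Type*} [Fintype V] [DecidableEq V] {M : Matrix V V ℝ}

theorem setOf_exists_mulVec_eq_smul_eq_spectrum (M : Matrix V V ℝ) :
    {μ : ℝ | ∃ x : V → ℝ, x ≠ 0 ∧ M *ᵥ x = μ • x} = spectrum ℝ M := by
  ext μ
  rw [← spectrum_toLin', ← Module.End.hasEigenvalue_iff_mem_spectrum]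
  constructor
  · rintro ⟨x, hx, hMx⟩
    exact Module.End.hasEigenvalue_of_hasEigenvector
      ⟨Module.End.mem_eigenspace_iff.2 (by simpa using hMx), hx⟩
  · intro h
    obtain ⟨x, hx, hx0⟩ := h.exists_hasEigenvector
    exact ⟨x, hx0, by simpa using Module.End.mem_eigenspace_iff.1 hx⟩

theorem lambdaMin_eq_sInf_spectrum (M : Matrix V V ℝ) : lambdaMin M = sInf (spectrum ℝ M) :=
  congrArg sInf (setOf_exists_mulVec_eq_smul_eq_spectrum M)

namespace IsHermitian

theorem lambdaMin_mem_spectrum [Nonempty V] (hM : M.IsHermitian) :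
    lambdaMin M ∈ spectrum ℝ M := by
  rw [lambdaMin_eq_sInf_spectrum, hM.spectrum_real_eq_range_eigenvalues]
  exact (Set.range_nonempty _).csInf_mem (Set.finite_range _)

theorem lambdaMin_le_of_mem_spectrum (hM : M.IsHermitian) {μ : ℝ} (hμ : μ ∈ spectrum ℝ M) :
    lambdaMin M ≤ μ := by
  rw [hM.spectrum_real_eq_range_eigenvalues] at hμ
  rw [lambdaMin_eq_sInf_spectrum, hM.spectrum_real_eq_range_eigenvalues]
  exact csInf_le (Set.finite_range _).bddBelow hμ

theorem lambdaMin_mul_dotProduct_le (hM : M.IsHermitian) (x : V → ℝ) :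
    lambdaMin M * (x ⬝ᵥ x) ≤ x ⬝ᵥ M *ᵥ x := by
  set c := lambdaMin M
  have hMc : (M - algebraMap ℝ _ c).IsHermitian := by
    rw [algebraMap_eq_diagonal]
    exact hM.sub (isHermitian_diagonal _)
  have hpsd : (M - algebraMap ℝ _ c).PosSemidef := by
    refine hMc.posSemidef_iff_eigenvalues_nonneg.2 fun i => ?_
    have hi := hMc.eigenvalues_mem_spectrum_real i
    rw [← spectrum.sub_singleton_eq, Set.mem_sub] at hi
    obtain ⟨μ, hμ, _, rfl, hμi⟩ := hi
    simpa [← hμi] using hM.lambdaMin_le_of_mem_spectrum hμ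
  have hx := hpsd.re_dotProduct_nonneg x
  rw [Algebra.algebraMap_eq_smul_one] at hx
  simpa [sub_mulVec, smul_mulVec, dotProduct_sub] using hx

theorem le_lambdaMin [Nonempty V] (hM : M.IsHermitian) {c : ℝ}
    (h : ∀ x, c * (x ⬝ᵥ x) ≤ x ⬝ᵥ M *ᵥ x) : c ≤ lambdaMin M := by
  have hmem := hM.lambdaMin_mem_spectrum
  rw [← setOf_exists_mulVec_eq_smul_eq_spectrum] at hmem
  obtain ⟨x, hx0, hMx⟩ := hmem
  have hx := h x
  rw [hMx, dotProduct_smul, smul_eq_mul] at hx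
  exact le_of_mul_le_mul_right hx (dotProduct_self_star_pos_iff.2 hx0)

theorem lambdaMin_lt (hM : M.IsHermitian) {c : ℝ} (x : V → ℝ)
    (h : x ⬝ᵥ M *ᵥ x < c * (x ⬝ᵥ x)) : lambdaMin M < c :=
  lt_of_mul_lt_mul_right ((hM.lambdaMin_mul_dotProduct_le x).trans_lt h)
    (dotProduct_self_star_nonneg x)

end IsHermitian

end Matrix

section SignedComplete

open scoped Classical

variable {m : ℕ} (T : SimpleGraph (Fin m))

theorem isHermitian_signedCompleteMatrix : (signedCompleteMatrix T).IsHermitian := by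
  ext i j
  simp only [conjTranspose_apply, star_trivial, signedCompleteMatrix, eq_comm, T.adj_comm]

theorem dotProduct_signedCompleteMatrix_mulVec (x : Fin m → ℝ) :
    x ⬝ᵥ signedCompleteMatrix T *ᵥ x
      = (∑ i, x i) ^ 2 - ∑ i, x i ^ 2 - 2 * ∑ i, ∑ j, if T.Adj i j then x i * x j else 0 := by
  have entry (i j : Fin m) : x i * (signedCompleteMatrix T i j * x j)
      = x i * x j - (if i = j then x i * x j else 0)
        - 2 * (if T.Adj i j then x i * x j else 0) := by
    rcases eq_or_ne i j with rfl | hij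
    · simp [signedCompleteMatrix]
    · by_cases hadj : T.Adj i j <;>
        simp only [signedCompleteMatrix, hij, hadj, if_true, if_false] <;> ring
  simp only [dotProduct, mulVec, mul_sum, entry, sum_sub_distrib, sum_ite_eq, mem_univ, if_true]
  rw [sq, sum_mul_sum]
  simp only [sq]

end SignedComplete

/-- The decidability instance of `(fromRel r).Adj` is an implicit argument, so that it is unified
with whichever instance the goal carries. -/
theorem SimpleGraph.sum_sum_fromRel_adj {V : Type*} [Fintype V] {r : V → V → Prop}
    [DecidableRel r] {_ : DecidableRel (SimpleGraph.fromRel r).Adj}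
    (hr : ∀ i j, r i j → ¬ r j i) (f : V → V → ℝ) :
    ∑ i, ∑ j, (if (SimpleGraph.fromRel r).Adj i j then f i j else 0)
      = ∑ i, ∑ j, if r i j then f i j + f j i else 0 := by
  have split (i j : V) : (if (SimpleGraph.fromRel r).Adj i j then f i j else 0)
      = (if r i j then f i j else 0) + (if r j i then f i j else 0) := by
    by_cases hij : r i j
    · have hne : i ≠ j := by rintro rfl; exact hr i i hij hij
      simp [hij, hr i j hij, hne]
    · by_cases hji : r j i
      · have hne : i ≠ j := by rintro rfl; exact hij hji
        simp [hij, hji, hne]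
      · simp [hij, hji]
  simp only [split, sum_add_distrib]
  rw [sum_comm (f := fun i j => if r j i then f i j else 0)]
  simp only [← sum_add_distrib, ite_add_ite, add_zero]

def treeRel (a b i j : ℕ) : Prop :=
  (i = 0 ∧ 1 ≤ j ∧ j ≤ a - 1) ∨ (i = a ∧ a + 1 ≤ j ∧ j ≤ a + b - 1) ∨ (i = 1 ∧ j = a + 1)

instance (a b : ℕ) : DecidableRel (treeRel a b) := fun _ _ => by unfold treeRel; infer_instance

theorem treeTT_eq_fromRel (a b : ℕ) :
    treeTT a b = SimpleGraph.fromRel fun i j : Fin (a + b) => treeRel a b i j := rfl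

open scoped Classical in
theorem sum_sum_treeTT_adj {a b : ℕ} (ha : 2 ≤ a) (hb : 2 ≤ b) (y : ℕ → ℝ) :
    ∑ i : Fin (a + b), ∑ j : Fin (a + b), (if (treeTT a b).Adj i j then y i * y j else 0)
      = 2 * (y 0 * ∑ j ∈ Ico 1 a, y j + y a * ∑ j ∈ Ico (a + 1) (a + b), y j
          + y 1 * y (a + 1)) := by
  have split (i j : ℕ) : (if treeRel a b i j then y i * y j + y j * y i else 0)
      = (if i = 0 then if j ∈ Ico 1 a then 2 * (y i * y j) else 0 else 0)
        + (if i = a then if j ∈ Ico (a + 1) (a + b) then 2 * (y i * y j) else 0 else 0)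
        + (if i = 1 then if j = a + 1 then 2 * (y i * y j) else 0 else 0) := by
    by_cases h : treeRel a b i j <;> simp only [h, if_true, if_false, mem_Ico] <;>
      unfold treeRel at h <;> split_ifs <;> first | ring1 | (exfalso; omega)
  have hIco₁ : Ico 1 a ⊆ range (a + b) := fun j hj =>
    mem_range.2 ((mem_Ico.1 hj).2.trans_le (Nat.le_add_right a b))
  have hIco₂ : Ico (a + 1) (a + b) ⊆ range (a + b) := fun j hj => mem_range.2 (mem_Ico.1 hj).2
  rw [treeTT_eq_fromRel]
  refine (SimpleGraph.sum_sum_fromRel_adj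
    (fun i j h h' => by unfold treeRel at h h'; omega) _).trans ?_
  rw [Fin.sum_univ_eq_sum_range
      (fun i => ∑ j : Fin (a + b), if treeRel a b i j then y i * y j + y j * y i else 0),
    sum_congr rfl fun i _ => Fin.sum_univ_eq_sum_range
      (fun j => if treeRel a b i j then y i * y j + y j * y i else 0) (a + b)]
  simp only [split, sum_add_distrib, ← ite_sum_zero, sum_ite_eq', sum_ite_mem, mem_range,
    inter_eq_right.2 hIco₁, inter_eq_right.2 hIco₂, ← mul_sum]
  rw [if_pos (by omega), if_pos (by omega), if_pos (by omega), if_pos (by omega)]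
  ring

theorem dotProduct_signedCompleteMatrix_treeTT_mulVec {a b : ℕ} (ha : 2 ≤ a) (hb : 2 ≤ b)
    (y : ℕ → ℝ) :
    (fun i : Fin (a + b) => y i) ⬝ᵥ signedCompleteMatrix (treeTT a b) *ᵥ (fun i => y i)
      = (∑ j ∈ range (a + b), y j) ^ 2 - ∑ j ∈ range (a + b), y j ^ 2
        - 4 * (y 0 * ∑ j ∈ Ico 1 a, y j + y a * ∑ j ∈ Ico (a + 1) (a + b), y j
          + y 1 * y (a + 1)) := by
  rw [dotProduct_signedCompleteMatrix_mulVec, sum_sum_treeTT_adj ha hb,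
    Fin.sum_univ_eq_sum_range y, Fin.sum_univ_eq_sum_range (fun j => y j ^ 2)]
  ring

theorem dotProduct_self_comp_val (n : ℕ) (y : ℕ → ℝ) :
    (fun i : Fin n => y i) ⬝ᵥ (fun i => y i) = ∑ j ∈ range n, y j ^ 2 := by
  simp only [dotProduct, ← sq]
  exact Fin.sum_univ_eq_sum_range (fun j => y j ^ 2) n

theorem sum_range_add_eq_blocks {a b : ℕ} (ha : 2 ≤ a) (hb : 2 ≤ b) (f : ℕ → ℝ) :
    ∑ j ∈ range (a + b), f j
      = f 0 + f 1 + ∑ j ∈ Ico 2 a, f j + f a + f (a + 1) + ∑ j ∈ Ico (a + 2) (a + b), f j := by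
  rw [range_eq_Ico, ← sum_Ico_consecutive f (by omega : 0 ≤ 2) (by omega : 2 ≤ a + b),
    ← sum_Ico_consecutive f (by omega : 2 ≤ a) (by omega : a ≤ a + b),
    ← sum_Ico_consecutive f (by omega : a ≤ a + 2) (by omega : a + 2 ≤ a + b)]
  simp only [Nat.Ico_zero_eq_range, sum_range_succ, range_one, sum_singleton,
    le_add_iff_nonneg_right, zero_le, sum_Ico_succ_top, Nat.Ico_succ_singleton]
  ring

theorem four_mul_mul_sum_le {ι : Type*} (s : Finset ι) (f : ι → ℝ) (u c : ℝ) :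
    4 * c * (u * ∑ i ∈ s, f i) ≤ 4 * #s * u ^ 2 + c ^ 2 * ∑ i ∈ s, f i ^ 2 := by
  have h := sum_nonneg fun i (_ : i ∈ s) => sq_nonneg (2 * u - c * f i)
  simp only [sub_sq, sum_add_distrib, sum_sub_distrib, sum_const, nsmul_eq_mul, mul_pow,
    ← mul_sum] at h
  linarith

/-- AM–GM with weights `4uy ≤ (4/c) u² + c y²` on the edges at the two centres,
`4up ≤ (4/(c-2)) u² + (c-2) p²` on the edges to the two vertices `p, q` of the bridge, and
`4pq ≤ 2p² + 2q²` on the bridge: every vertex receives total weight at most `c`. -/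
theorem four_mul_treeTT_edgeSum_le {c α β u p s₁ t₁ v q s₂ t₂ : ℝ} (hc : 9 / 2 ≤ c)
    (hα : 4 * α ≤ 2 * c + 1) (hβ : 4 * β ≤ 2 * c + 1)
    (h₁ : 4 * c * (u * s₁) ≤ 4 * α * u ^ 2 + c ^ 2 * t₁)
    (h₂ : 4 * c * (v * s₂) ≤ 4 * β * v ^ 2 + c ^ 2 * t₂) :
    4 * (u * (p + s₁) + v * (q + s₂) + p * q)
      ≤ c * (u ^ 2 + p ^ 2 + t₁ + v ^ 2 + q ^ 2 + t₂) := by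
  have hc2 : 0 < c - 2 := by linarith
  have hcc : 0 < c * (c - 2) := by nlinarith
  have hcoeff₁ : 4 * α * (c - 2) + 4 * c ≤ c ^ 2 * (c - 2) := by nlinarith
  have hcoeff₂ : 4 * β * (c - 2) + 4 * c ≤ c ^ 2 * (c - 2) := by nlinarith
  refine le_of_mul_le_mul_left ?_ hcc
  linarith [mul_le_mul_of_nonneg_left h₁ hc2.le, mul_le_mul_of_nonneg_left h₂ hc2.le,
    mul_le_mul_of_nonneg_right hcoeff₁ (sq_nonneg u),
    mul_le_mul_of_nonneg_right hcoeff₂ (sq_nonneg v),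
    mul_nonneg (by linarith : (0 : ℝ) ≤ c) (sq_nonneg (2 * u - (c - 2) * p)),
    mul_nonneg (by linarith : (0 : ℝ) ≤ c) (sq_nonneg (2 * v - (c - 2) * q)),
    mul_nonneg hcc.le (sq_nonneg (p - q))]

/-- The hint squares come from an `LDLᵀ` decomposition of the form. -/
theorem treeTT_three_three_form_ge (u p w v q z : ℝ) :
    (-7 / 2) * (u ^ 2 + p ^ 2 + w ^ 2 + v ^ 2 + q ^ 2 + z ^ 2)
      ≤ (u + p + w + v + q + z) ^ 2 - (u ^ 2 + p ^ 2 + w ^ 2 + v ^ 2 + q ^ 2 + z ^ 2)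
        - 4 * (u * (p + w) + v * (q + z) + p * q) := by
  linarith [sq_nonneg (7 * u - 2 * p - 2 * w + 2 * v + 2 * q + 2 * z),
    sq_nonneg (45 * p + 10 * w + 18 * v - 10 * q + 18 * z),
    sq_nonneg (55 * w + 18 * v + 26 * q + 18 * z), sq_nonneg (29 * v - 18 * q - 26 * z),
    sq_nonneg (423 * q - 230 * z), sq_nonneg z]

theorem treeTT_four_three_form_ge (u p w₁ w₂ v q z : ℝ) :
    (-9 / 2) * (u ^ 2 + p ^ 2 + (w₁ ^ 2 + w₂ ^ 2) + v ^ 2 + q ^ 2 + z ^ 2)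
      ≤ (u + p + (w₁ + w₂) + v + q + z) ^ 2
          - (u ^ 2 + p ^ 2 + (w₁ ^ 2 + w₂ ^ 2) + v ^ 2 + q ^ 2 + z ^ 2)
        - 4 * (u * (p + (w₁ + w₂)) + v * (q + z) + p * q) := by
  linarith [sq_nonneg (9 * u - 2 * p - 2 * w₁ - 2 * w₂ + 2 * v + 2 * q + 2 * z),
    sq_nonneg (77 * p + 14 * w₁ + 14 * w₂ + 22 * v - 14 * q + 22 * z),
    sq_nonneg (91 * w₁ + 14 * w₂ + 22 * v + 30 * q + 22 * z),
    sq_nonneg (105 * w₂ + 22 * v + 30 * q + 22 * z), sq_nonneg (67 * v - 30 * q - 38 * z),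
    sq_nonneg (2489 * q - 434 * z), sq_nonneg z]

theorem le_dotProduct_signedCompleteMatrix_treeTT_mulVec {a b : ℕ} (hba : b ≤ a)
    (hab : a ≤ b + 1) (h6 : 6 ≤ a + b) (x : Fin (a + b) → ℝ) :
    (5 / 2 - (a + b : ℝ)) * (x ⬝ᵥ x) ≤ x ⬝ᵥ signedCompleteMatrix (treeTT a b) *ᵥ x := by
  obtain ⟨y, rfl⟩ : ∃ y : ℕ → ℝ, x = fun i : Fin (a + b) => y i :=
    ⟨fun k => if h : k < a + b then x ⟨k, h⟩ else 0, by ext i; simp⟩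
  rw [dotProduct_signedCompleteMatrix_treeTT_mulVec (by omega) (by omega),
    dotProduct_self_comp_val, sum_range_add_eq_blocks (by omega) (by omega) y,
    sum_range_add_eq_blocks (by omega) (by omega) (fun j => y j ^ 2),
    sum_eq_sum_Ico_succ_bot (by omega : 1 < a),
    sum_eq_sum_Ico_succ_bot (by omega : a + 1 < a + b)]
  by_cases h8 : 8 ≤ a + b
  · have hcard₁ : ((#(Ico 2 a) : ℕ) : ℝ) = a - 2 := by
      rw [Nat.card_Ico, Nat.cast_sub (by omega)]; norm_num
    have hcard₂ : ((#(Ico (a + 2) (a + b)) : ℕ) : ℝ) = b - 2 := by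
      rw [Nat.card_Ico, Nat.cast_sub (by omega)]; push_cast; ring
    have h8' : (8 : ℝ) ≤ a + b := by exact_mod_cast h8
    have hab' : (a : ℝ) ≤ b + 1 := by exact_mod_cast hab
    have hba' : (b : ℝ) ≤ a := by exact_mod_cast hba
    have hedges := four_mul_treeTT_edgeSum_le (c := a + b - 7 / 2) (α := a - 2) (β := b - 2)
      (p := y 1) (q := y (a + 1)) (by linarith) (by linarith) (by linarith)
      (hcard₁ ▸ four_mul_mul_sum_le (Ico 2 a) y (y 0) _)
      (hcard₂ ▸ four_mul_mul_sum_le (Ico (a + 2) (a + b)) y (y a) _)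
    linarith [sq_nonneg (y 0 + y 1 + ∑ j ∈ Ico 2 a, y j + y a + y (a + 1)
      + ∑ j ∈ Ico (a + 2) (a + b), y j)]
  · obtain ⟨rfl, rfl⟩ | ⟨rfl, rfl⟩ : (a = 3 ∧ b = 3) ∨ (a = 4 ∧ b = 3) := by omega
    · simp only [Nat.cast_ofNat, Nat.Ico_succ_singleton, sum_singleton, Nat.reduceAdd]
      linarith [treeTT_three_three_form_ge (y 0) (y 1) (y 2) (y 3) (y 4) (y 5)]
    · simp only [Nat.cast_ofNat, Nat.reduceLeDiff, sum_Ico_succ_top, Nat.Ico_succ_singleton,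
        sum_singleton, Nat.reduceAdd]
      linarith [treeTT_four_three_form_ge (y 0) (y 1) (y 2) (y 3) (y 4) (y 5) (y 6)]

theorem exists_dotProduct_signedCompleteMatrix_treeTT_mulVec_lt {a b : ℕ} (hba : b ≤ a)
    (hab : a ≤ b + 1) (h8 : 8 ≤ a + b) :
    ∃ x : Fin (a + b) → ℝ, x ⬝ᵥ signedCompleteMatrix (treeTT a b) *ᵥ x < -4 * (x ⬝ᵥ x) := by
  set y : ℕ → ℝ := fun k => if k = 0 then 2 else if k < a then 1 else if k = a then -2 else -1
  have hy₀ : y 0 = 2 := if_pos rfl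
  have hy₁ : y 1 = 1 := by simp [y, show 1 < a by omega]
  have hya : y a = -2 := by simp [y, show a ≠ 0 by omega]
  have hya₁ : y (a + 1) = -1 := by simp [y]
  have hleaf₁ (j : ℕ) (hj : j ∈ Ico 2 a) : y j = 1 := by
    simp only [mem_Ico] at hj
    simp [y, show j ≠ 0 by omega, hj.2]
  have hleaf₂ (j : ℕ) (hj : j ∈ Ico (a + 2) (a + b)) : y j = -1 := by
    simp only [mem_Ico] at hj
    simp [y, show j ≠ 0 by omega, show ¬ j < a by omega, show j ≠ a by omega]
  have hs₁ := sum_eq_card_nsmul hleaf₁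
  have ht₁ := sum_eq_card_nsmul (f := fun j => y j ^ 2) fun j hj => by rw [hleaf₁ j hj, one_pow]
  have hs₂ := sum_eq_card_nsmul hleaf₂
  have ht₂ := sum_eq_card_nsmul (f := fun j => y j ^ 2) fun j hj => by
    rw [hleaf₂ j hj, neg_one_sq]
  refine ⟨fun i => y i, ?_⟩
  rw [dotProduct_signedCompleteMatrix_treeTT_mulVec (by omega) (by omega),
    dotProduct_self_comp_val, sum_range_add_eq_blocks (by omega) (by omega) y,
    sum_range_add_eq_blocks (by omega) (by omega) (fun j => y j ^ 2),
    sum_eq_sum_Ico_succ_bot (by omega : 1 < a),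
    sum_eq_sum_Ico_succ_bot (by omega : a + 1 < a + b),
    hs₁, ht₁, hs₂, ht₂, hy₀, hy₁, hya, hya₁, Nat.card_Ico, Nat.card_Ico]
  simp only [nsmul_eq_mul, Nat.cast_sub (show 2 ≤ a by omega),
    Nat.cast_sub (show a + 2 ≤ a + b by omega)]
  have h8' : (8 : ℝ) ≤ a + b := by exact_mod_cast h8
  have hab' : (a : ℝ) ≤ b + 1 := by exact_mod_cast hab
  have hba' : (b : ℝ) ≤ a := by exact_mod_cast hba
  push_cast
  nlinarith

/-- For `n ≥ 6`, with `a = ⌈n/2⌉` and `b = ⌊n/2⌋`, the least eigenvalue of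
`A((K_n, 𝒯⁻_{a-1,b-1}))` satisfies `λₙ > 2 - n`, and moreover `λₙ < -4` when `n ≥ 8`. -/
theorem stmt9 (n : ℕ) (hn : 6 ≤ n) (a b : ℕ) (ha : a = (n + 1) / 2) (hb : b = n / 2) :
    2 - (n : ℝ) < lambdaMin (signedCompleteMatrix (treeTT a b)) ∧
    (8 ≤ n → lambdaMin (signedCompleteMatrix (treeTT a b)) < -4) := by
  have hba : b ≤ a := by omega
  have hab : a ≤ b + 1 := by omega
  have hn' : (n : ℝ) = a + b := by exact_mod_cast (by omega : n = a + b)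
  have hM := isHermitian_signedCompleteMatrix (treeTT a b)
  have : Nonempty (Fin (a + b)) := ⟨⟨0, by omega⟩⟩
  refine ⟨?_, fun h8 => ?_⟩
  · have := hM.le_lambdaMin (le_dotProduct_signedCompleteMatrix_treeTT_mulVec hba hab (by omega))
    linarith
  · obtain ⟨x, hx⟩ := exists_dotProduct_signedCompleteMatrix_treeTT_mulVec_lt hba hab (by omega)
    exact hM.lambdaMin_lt x hx
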